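/- arXiv:1911.09944 — 4 statements merged into one kernel-verified Lean document; each statement's English description precedes it below -/
import Mathlib

section
/- For fixed integers q ≥ 2 and R ≥ 1, liminf_{n→∞} K_D^q(n,R) · n^R (q−1)^R / (R! · q^n) ≥ 1; that is, every R-deletion-covering code of length n has at least (R! q^n / (n^R (q−1)^R)) · (1 − o(1)) codewords as n → ∞. -/
/-- `KD q n R` is the minimum cardinality of an `R`-deletion-covering code of
length-`n` words over the alphabet `Fin q`. -/
noncomputable def KD (q n R : ℕ) : ℕ :=
  sInf {k : ℕ | ∃ C : Finset (List (Fin q)),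
    (∀ c ∈ C, c.length = n) ∧
    (∀ y : List (Fin q), y.length = n - R → ∃ c ∈ C, y.Sublist c) ∧
    C.card = k}

/-!
A sphere-covering argument refined by the number of runs. Deleting `R` symbols from a word with
`r` changes (adjacent unequal symbols) leaves at most `C(r + R, R)` distinct words (Levenshtein),
and if `y` of length `n - R` is a subsequence of `c`, then `c` has at most `2R` more changes than
`y`. The generating function `∑ z ^ changes y ≤ (1 + (q - 1) z) ^ m` gives a Chernoff bound: for
`a > (q - 1) / q` all but a vanishing fraction of the words of length `n - R` have at most `a n`
changes. Covering those words forces `K_D^q(n, R) · C(a n + 3R, R) ≥ (1 - o(1)) q ^ (n - R)`,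
hence `liminf ≥ ((q - 1) / (q a)) ^ R`, and `a ↓ (q - 1) / q` gives `1`.

In `ℝ`, `liminf` of a sequence that is not bounded above is a junk value, so the matching upper
bound `K_D^q(n, R) = O(q ^ n / n ^ R)` is needed too; it comes from concatenating `R`
Varshamov–Tenengolts single-deletion-covering codes.
-/

open Finset Filter Topology

namespace DeletionCovering

section Combinatorics

variable {α : Type*} [DecidableEq α]

/-- One less than the number of runs of a nonempty word. -/
def changes : List α → ℕ
  | a :: b :: t => changes (b :: t) + if a = b then 0 else 1
  | _ => 0

@[simp] lemma changes_nil : changes ([] : List α) = 0 := rfl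

@[simp] lemma changes_singleton (a : α) : changes [a] = 0 := rfl

lemma changes_cons_cons (a b : α) (t : List α) :
    changes (a :: b :: t) = changes (b :: t) + if a = b then 0 else 1 := rfl

lemma changes_cons_le (a : α) (l : List α) : changes (a :: l) ≤ changes l + 1 := by
  cases l with
  | nil => simp
  | cons b t => rw [changes_cons_cons]; split <;> omega

lemma changes_le_changes_cons (a : α) (l : List α) : changes l ≤ changes (a :: l) := by
  cases l with
  | nil => simp
  | cons b t => rw [changes_cons_cons]; omega

lemma changes_append_le (l₁ l₂ : List α) :
    changes (l₁ ++ l₂) ≤ changes l₁ + changes l₂ + 1 := by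
  induction l₁ with
  | nil => simp
  | cons a t ih =>
    cases t with
    | nil => simpa using changes_cons_le a l₂
    | cons b t => simp only [List.cons_append, changes_cons_cons] at ih ⊢; omega

lemma changes_add_changes_le (l₁ l₂ : List α) :
    changes l₁ + changes l₂ ≤ changes (l₁ ++ l₂) := by
  induction l₁ with
  | nil => simp
  | cons a t ih =>
    cases t with
    | nil => simpa using changes_le_changes_cons a l₂
    | cons b t => simp only [List.cons_append, changes_cons_cons] at ih ⊢; omega

lemma changes_append_cons_le (l₁ l₂ : List α) (a : α) :
    changes (l₁ ++ a :: l₂) ≤ changes (l₁ ++ l₂) + 2 := by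
  have := changes_append_le l₁ (a :: l₂)
  have := changes_cons_le a l₂
  have := changes_add_changes_le l₁ l₂
  omega

lemma changes_append_le_of_sublist {y c : List α} (h : y.Sublist c) (p : List α) :
    changes (p ++ c) ≤ changes (p ++ y) + 2 * (c.length - y.length) := by
  induction h generalizing p with
  | slnil => simp
  | @cons y c a h ih =>
    have := changes_append_cons_le p c a
    have := ih p
    have := h.length_le
    simp only [List.length_cons]
    omega
  | cons_cons a h ih =>
    simpa using ih (p ++ [a])

lemma changes_le_of_sublist {y c : List α} (h : y.Sublist c) :
    changes c ≤ changes y + 2 * (c.length - y.length) := by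
  simpa using changes_append_le_of_sublist h []

lemma changes_replicate_append_cons (k : ℕ) (a b : α) (t : List α) :
    changes (List.replicate (k + 1) a ++ b :: t) = changes (b :: t) + if a = b then 0 else 1 := by
  induction k with
  | zero => rfl
  | succ k ih =>
    simp only [List.replicate_succ, List.cons_append, changes_cons_cons] at ih ⊢
    simpa using ih

def deletionBall (c : List α) (D : ℕ) : Finset (List α) :=
  {y ∈ c.sublists.toFinset | y.length + D = c.length}

lemma mem_deletionBall {c y : List α} {D : ℕ} :
    y ∈ deletionBall c D ↔ y.Sublist c ∧ y.length + D = c.length := by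
  simp [deletionBall]

lemma card_deletionBall_replicate_le_one (k D : ℕ) (a : α) :
    #(deletionBall (List.replicate k a) D) ≤ 1 := by
  refine card_le_one.mpr fun y hy y' hy' => ?_
  rw [mem_deletionBall, List.sublist_replicate_iff] at hy hy'
  obtain ⟨⟨j, -, rfl⟩, hj⟩ := hy
  obtain ⟨⟨j', -, rfl⟩, hj'⟩ := hy'
  simp only [List.length_replicate] at hj hj'
  rw [show j = j' by omega]

/-- Deleting `i` symbols from a run gives the same word whichever `i` are deleted. -/
lemma card_deletionBall_replicate_append_le (k D : ℕ) (a : α) (c : List α) :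
    #(deletionBall (List.replicate k a ++ c) D) ≤
      ∑ i ∈ range (D + 1), #(deletionBall c (D - i)) := by
  have hsub : deletionBall (List.replicate k a ++ c) D ⊆ (range (D + 1)).biUnion
      fun i => (deletionBall c (D - i)).image (List.replicate (k - i) a ++ ·) := by
    intro y hy
    obtain ⟨hy, hlen⟩ := mem_deletionBall.mp hy
    obtain ⟨u, v, rfl, hu, hv⟩ := List.sublist_append_iff.mp hy
    obtain ⟨j, hjk, rfl⟩ := List.sublist_replicate_iff.mp hu
    have := hv.length_le
    simp only [List.length_append, List.length_replicate] at hlen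
    refine mem_biUnion.mpr ⟨k - j, mem_range.mpr (by omega), mem_image.mpr ⟨v, ?_, ?_⟩⟩
    · exact mem_deletionBall.mpr ⟨hv, by omega⟩
    · rw [Nat.sub_sub_self hjk]
  calc #(deletionBall (List.replicate k a ++ c) D)
      ≤ ∑ i ∈ range (D + 1), #((deletionBall c (D - i)).image (List.replicate (k - i) a ++ ·)) :=
        (card_le_card hsub).trans card_biUnion_le
    _ ≤ ∑ i ∈ range (D + 1), #(deletionBall c (D - i)) := sum_le_sum fun _ _ => card_image_le

lemma sum_range_add_choose_self (x D : ℕ) :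
    ∑ d ∈ range (D + 1), (x + d).choose d = (x + D + 1).choose D := by
  calc ∑ d ∈ range (D + 1), (x + d).choose d = ∑ d ∈ range (D + 1), (d + x).choose x :=
        sum_congr rfl fun d _ => by rw [add_comm, Nat.choose_symm_add]
    _ = (x + 1 + D).choose (x + 1) := by rw [Nat.sum_range_add_choose]; ring_nf
    _ = (x + D + 1).choose D := by rw [Nat.choose_symm_add, add_right_comm]

lemma card_deletionBall_replicate_append_le_choose (c : List α) (k D : ℕ) (a : α) :
    #(deletionBall (List.replicate (k + 1) a ++ c) D) ≤
      (changes (List.replicate (k + 1) a ++ c) + D).choose D := by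
  induction c generalizing k D a with
  | nil =>
    simpa using (card_deletionBall_replicate_le_one (k + 1) D a).trans
      (Nat.choose_pos (Nat.le_add_left D _))
  | cons b t ih =>
    by_cases hab : a = b
    · subst hab
      simpa [List.replicate_succ'] using ih (k + 1) D a
    · rw [changes_replicate_append_cons, if_neg hab]
      calc #(deletionBall (List.replicate (k + 1) a ++ b :: t) D)
          ≤ ∑ i ∈ range (D + 1), #(deletionBall (List.replicate 1 b ++ t) (D - i)) :=
            card_deletionBall_replicate_append_le (k + 1) D a (b :: t)
        _ ≤ ∑ i ∈ range (D + 1), (changes (b :: t) + (D - i)).choose (D - i) :=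
            sum_le_sum fun i _ => ih 0 (D - i) b
        _ = (changes (b :: t) + 1 + D).choose D := by
            rw [add_right_comm, ← sum_range_add_choose_self,
              ← sum_range_reflect (fun d => (changes (b :: t) + d).choose d) (D + 1)]
            simp only [Nat.add_sub_cancel]

/-- Levenshtein's bound: the deletion ball is at most the number of ways to distribute the
`D` deletions among the runs of `c`. -/
lemma card_deletionBall_le (c : List α) (D : ℕ) :
    #(deletionBall c D) ≤ (changes c + D).choose D := by
  cases c with
  | nil =>
    refine (card_le_one.mpr fun y hy y' hy' => ?_).trans (Nat.choose_pos (Nat.le_add_left D _))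
    rw [mem_deletionBall, List.sublist_nil] at hy hy'
    rw [hy.1, hy'.1]
  | cons a t => exact card_deletionBall_replicate_append_le_choose t 0 D a

lemma card_filter_deletionBall_changes_le (c : List α) (D k : ℕ) :
    #{y ∈ deletionBall c D | changes y ≤ k} ≤ (k + 3 * D).choose D := by
  obtain hempty | ⟨y, hy⟩ := {y ∈ deletionBall c D | changes y ≤ k}.eq_empty_or_nonempty
  · simp [hempty]
  obtain ⟨hyc, hyk⟩ := mem_filter.mp hy
  obtain ⟨hsub, hlen⟩ := mem_deletionBall.mp hyc
  have := changes_le_of_sublist hsub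
  calc #{y ∈ deletionBall c D | changes y ≤ k} ≤ #(deletionBall c D) := card_filter_le _ _
    _ ≤ (changes c + D).choose D := card_deletionBall_le c D
    _ ≤ (k + 3 * D).choose D := Nat.choose_le_choose D (by omega)

end Combinatorics

section Words

lemma cons_uncurry_injective {α : Type*} : Function.Injective fun p : α × List α => p.1 :: p.2 :=
  fun _ _ h => Prod.ext (List.cons_eq_cons.mp h).1 (List.cons_eq_cons.mp h).2

variable (α : Type*) [Fintype α] [DecidableEq α]

def words : ℕ → Finset (List α)
  | 0 => {[]}
  | m + 1 => (univ ×ˢ words m).image fun p => p.1 :: p.2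

variable {α}

lemma mem_words {m : ℕ} {y : List α} : y ∈ words α m ↔ y.length = m := by
  induction m generalizing y with
  | zero => simp [words]
  | succ m ih => cases y <;> simp [words, ih]

lemma card_words (m : ℕ) : #(words α m) = Fintype.card α ^ m := by
  induction m with
  | zero => rfl
  | succ m ih =>
    rw [words, card_image_of_injective _ cons_uncurry_injective, card_product, ih, card_univ,
      pow_succ']

lemma sum_words_succ {M : Type*} [AddCommMonoid M] (m : ℕ) (f : List α → M) :
    ∑ y ∈ words α (m + 1), f y = ∑ a, ∑ t ∈ words α m, f (a :: t) := by
  rw [words, sum_image fun p _ q _ h => cons_uncurry_injective h, sum_product]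

lemma sum_ite_eq_one_else (b : α) (z : ℝ) :
    ∑ a, (if a = b then 1 else z) = 1 + (Fintype.card α - 1) * z := by
  rw [Fintype.sum_eq_add_sum_compl b, if_pos rfl,
    sum_congr rfl fun a ha => if_neg (mem_compl.mp ha ∘ mem_singleton.mpr), sum_const,
    card_compl, card_singleton, nsmul_eq_mul, Nat.cast_sub (Fintype.card_pos_iff.mpr ⟨b⟩),
    Nat.cast_one]

variable [Nonempty α]

lemma sum_pow_changes_cons_le {z : ℝ} (hz : 1 ≤ z) (t : List α) :
    ∑ a, z ^ changes (a :: t) ≤ (1 + (Fintype.card α - 1) * z) * z ^ changes t := by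
  cases t with
  | nil =>
    have : (1 : ℝ) ≤ Fintype.card α := by exact_mod_cast Fintype.card_pos
    simp only [changes_singleton, changes_nil, pow_zero, sum_const, card_univ, nsmul_eq_mul,
      mul_one]
    nlinarith
  | cons b u =>
    simp_rw [changes_cons_cons, pow_add, ← mul_sum, apply_ite (z ^ ·), pow_zero, pow_one]
    rw [sum_ite_eq_one_else, mul_comm]

lemma sum_pow_changes_le {z : ℝ} (hz : 1 ≤ z) (m : ℕ) :
    ∑ y ∈ words α m, z ^ changes y ≤ (1 + (Fintype.card α - 1) * z) ^ m := by
  induction m with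
  | zero => simp [words]
  | succ m ih =>
    have h0 : (0 : ℝ) ≤ 1 + (Fintype.card α - 1) * z := by
      have : (1 : ℝ) ≤ Fintype.card α := by exact_mod_cast Fintype.card_pos
      nlinarith
    calc ∑ y ∈ words α (m + 1), z ^ changes y
        = ∑ t ∈ words α m, ∑ a, z ^ changes (a :: t) := by rw [sum_words_succ, sum_comm]
      _ ≤ ∑ t ∈ words α m, (1 + (Fintype.card α - 1) * z) * z ^ changes t :=
          sum_le_sum fun t _ => sum_pow_changes_cons_le hz t
      _ ≤ (1 + (Fintype.card α - 1) * z) ^ (m + 1) := by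
          rw [← mul_sum, pow_succ']
          exact mul_le_mul_of_nonneg_left ih h0

lemma card_filter_le_changes_mul_pow_le {z : ℝ} (hz : 1 ≤ z) (m k : ℕ) :
    (#{y ∈ words α m | k ≤ changes y} : ℝ) * z ^ k ≤ (1 + (Fintype.card α - 1) * z) ^ m := by
  calc (#{y ∈ words α m | k ≤ changes y} : ℝ) * z ^ k
      = ∑ y ∈ words α m with k ≤ changes y, z ^ k := by rw [sum_const, nsmul_eq_mul]
    _ ≤ ∑ y ∈ words α m with k ≤ changes y, z ^ changes y :=
        sum_le_sum fun y hy => pow_le_pow_right₀ hz (mem_filter.mp hy).2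
    _ ≤ ∑ y ∈ words α m, z ^ changes y :=
        sum_le_sum_of_subset_of_nonneg (filter_subset _ _) fun _ _ _ => by positivity
    _ ≤ _ := sum_pow_changes_le hz m

lemma card_changes_ge_div_pow_le (a : ℝ) {t : ℝ} (ht : 0 < t) (m : ℕ) :
    (#{y ∈ words α m | a * m ≤ changes y} : ℝ) / Fintype.card α ^ m ≤
      Real.exp ((Fintype.card α - 1) / Fintype.card α * t - a * (t / (1 + t))) ^ m := by
  set Q : ℝ := (Fintype.card α : ℝ)
  set p : ℝ := (Q - 1) / Q
  have hQ : (1 : ℝ) ≤ Q := Nat.one_le_cast.mpr Fintype.card_pos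
  set k := ⌈a * m⌉₊
  have hmarkov := card_filter_le_changes_mul_pow_le (le_add_of_nonneg_right ht.le) m k (α := α)
  have hbase : 1 + (Q - 1) * (1 + t) = Q * (1 + p * t) := by
    simp only [p]; field_simp; ring
  rw [hbase, mul_pow] at hmarkov
  have hlog : Real.exp (t / (1 + t)) ≤ 1 + t := by
    have := Real.one_sub_inv_le_log_of_pos (by linarith : (0 : ℝ) < 1 + t)
    have hs : t / (1 + t) = 1 - (1 + t)⁻¹ := by field_simp; ring
    exact (Real.exp_le_exp.mpr (hs ▸ this)).trans_eq (Real.exp_log (by linarith))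
  rw [filter_congr fun y _ => Nat.ceil_le.symm]
  calc (#{y ∈ words α m | k ≤ changes y} : ℝ) / Q ^ m ≤ (1 + p * t) ^ m / (1 + t) ^ k := by
        rw [div_le_div_iff₀ (by positivity) (by positivity)]
        linarith
    _ ≤ Real.exp (p * t) ^ m / Real.exp (t / (1 + t)) ^ k := by
        gcongr
        linarith [Real.add_one_le_exp (p * t)]
    _ ≤ Real.exp (p * t) ^ m / Real.exp (a * (t / (1 + t))) ^ m := by
        gcongr
        rw [← Real.exp_nat_mul, ← Real.exp_nat_mul, Real.exp_le_exp]
        have : a * m ≤ k := Nat.le_ceil _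
        have : 0 < t / (1 + t) := by positivity
        nlinarith
    _ = Real.exp (p * t - a * (t / (1 + t))) ^ m := by rw [← div_pow, ← Real.exp_sub]

/-- `(|α| - 1) / |α|` is the expected density of changes in a uniformly random word. -/
lemma tendsto_card_changes_ge_div_pow {a : ℝ}
    (ha : (Fintype.card α - 1) / Fintype.card α < a) :
    Tendsto (fun m : ℕ => (#{y ∈ words α m | a * m ≤ changes y} : ℝ) / Fintype.card α ^ m)
      atTop (𝓝 0) := by
  set p : ℝ := ((Fintype.card α : ℝ) - 1) / Fintype.card α
  have hQ : (1 : ℝ) ≤ Fintype.card α := Nat.one_le_cast.mpr Fintype.card_pos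
  have hp0 : 0 ≤ p := div_nonneg (by linarith) (by linarith)
  have hp1 : p ≤ 1 := (div_le_one (by linarith)).mpr (by linarith)
  set t : ℝ := (a - p) / 2
  have ht : 0 < t := by simp only [t]; linarith
  have hexponent : p * t - a * (t / (1 + t)) < 0 := by
    have hpa : p * (1 + t) < a := by simp only [t]; nlinarith
    have hdiff : a * (t / (1 + t)) - p * t = t * (a - p * (1 + t)) / (1 + t) := by
      field_simp
    have : 0 < t * (a - p * (1 + t)) / (1 + t) := div_pos (mul_pos ht (by linarith)) (by linarith)
    linarith
  exact tendsto_of_tendsto_of_tendsto_of_le_of_le tendsto_const_nhds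
    (tendsto_pow_atTop_nhds_zero_of_lt_one (Real.exp_pos _).le
      (Real.exp_lt_one_iff.mpr hexponent))
    (fun m => by positivity) (card_changes_ge_div_pow_le a ht)

lemma one_sub_card_changes_ge_div_le {a : ℝ} {m k : ℕ} (hk : a * m < k + 1) :
    1 - (#{y ∈ words α m | a * m ≤ changes y} : ℝ) / Fintype.card α ^ m ≤
      (#{y ∈ words α m | changes y ≤ k} : ℝ) / Fintype.card α ^ m := by
  have hsub : {y ∈ words α m | ¬changes y ≤ k} ⊆ {y ∈ words α m | a * m ≤ changes y} := by
    intro y hy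
    simp only [mem_filter, not_le] at hy ⊢
    have : (k : ℝ) + 1 ≤ changes y := by exact_mod_cast hy.2
    exact ⟨hy.1, by linarith⟩
  have hsplit := card_filter_add_card_filter_not (s := words α m) fun y => changes y ≤ k
  rw [card_words] at hsplit
  have hcard : (Fintype.card α ^ m : ℝ) ≤
      #{y ∈ words α m | changes y ≤ k} + #{y ∈ words α m | a * m ≤ changes y} := by
    exact_mod_cast hsplit.symm.le.trans (Nat.add_le_add_left (card_le_card hsub) _)
  have hpos : (0 : ℝ) < Fintype.card α ^ m := by positivity
  rw [one_sub_div hpos.ne', div_le_div_iff_of_pos_right hpos]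
  linarith

end Words

section Codes

variable {α : Type*} [DecidableEq α]

def IsDeletionCovering (n R : ℕ) (C : Finset (List α)) : Prop :=
  (∀ c ∈ C, c.length = n) ∧ ∀ y : List α, y.length = n - R → ∃ c ∈ C, y.Sublist c

/-- A word with at most `k` changes can only be covered by a codeword with at most `k + 2R`
changes, whose deletion ball is small. -/
lemma IsDeletionCovering.card_filter_changes_le [Fintype α] {n R : ℕ} {C : Finset (List α)}
    (hC : IsDeletionCovering n R C) (hRn : R ≤ n) (k : ℕ) :
    #{y ∈ words α (n - R) | changes y ≤ k} ≤ #C * (k + 3 * R).choose R := by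
  have hsub : {y ∈ words α (n - R) | changes y ≤ k} ⊆
      C.biUnion fun c => {y ∈ deletionBall c R | changes y ≤ k} := by
    intro y hy
    obtain ⟨hyw, hyk⟩ := mem_filter.mp hy
    obtain ⟨c, hc, hyc⟩ := hC.2 y (mem_words.mp hyw)
    have hlen : y.length + R = c.length := by rw [mem_words.mp hyw, hC.1 c hc]; omega
    exact mem_biUnion.mpr ⟨c, hc, mem_filter.mpr ⟨mem_deletionBall.mpr ⟨hyc, hlen⟩, hyk⟩⟩
  calc #{y ∈ words α (n - R) | changes y ≤ k}
      ≤ ∑ c ∈ C, #{y ∈ deletionBall c R | changes y ≤ k} :=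
        (card_le_card hsub).trans card_biUnion_le
    _ ≤ #C * (k + 3 * R).choose R :=
        sum_le_card_nsmul _ _ _ fun c _ => card_filter_deletionBall_changes_le c R k

lemma IsDeletionCovering.image₂_append {n₁ R₁ n₂ R₂ : ℕ} {C₁ C₂ : Finset (List α)}
    (h₁ : IsDeletionCovering n₁ R₁ C₁) (h₂ : IsDeletionCovering n₂ R₂ C₂) (hR₁ : R₁ ≤ n₁)
    (hR₂ : R₂ ≤ n₂) : IsDeletionCovering (n₁ + n₂) (R₁ + R₂) (image₂ (· ++ ·) C₁ C₂) := by
  refine ⟨fun c hc => ?_, fun y hy => ?_⟩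
  · obtain ⟨c₁, hc₁, c₂, hc₂, rfl⟩ := mem_image₂.mp hc
    rw [List.length_append, h₁.1 c₁ hc₁, h₂.1 c₂ hc₂]
  · obtain ⟨c₁, hc₁, hy₁⟩ := h₁.2 (y.take (n₁ - R₁)) (by rw [List.length_take]; omega)
    obtain ⟨c₂, hc₂, hy₂⟩ := h₂.2 (y.drop (n₁ - R₁)) (by rw [List.length_drop]; omega)
    refine ⟨c₁ ++ c₂, mem_image₂_of_mem hc₁ hc₂, ?_⟩
    simpa using hy₁.append hy₂

lemma isDeletionCovering_words [Fintype α] [Nonempty α] (n R : ℕ) :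
    IsDeletionCovering n R (words α n) := by
  refine ⟨fun c hc => mem_words.mp hc, fun y hy => ?_⟩
  refine ⟨y ++ List.replicate (n - y.length) (Classical.arbitrary α), mem_words.mpr ?_,
    List.sublist_append_left _ _⟩
  rw [List.length_append, List.length_replicate]
  omega

def vtWeight (z : α) : List α → ℕ
  | [] => 0
  | a :: t => vtWeight z t + if a = z then 0 else t.length + 1

lemma exists_sublist_vtWeight_eq_add {z b : α} (hb : b ≠ z) (y : List α) :
    ∀ k ≤ y.length + 1, ∃ c : List α, y.Sublist c ∧ c.length = y.length + 1 ∧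
      vtWeight z c = vtWeight z y + k := by
  induction y with
  | nil =>
    intro k hk
    obtain rfl | rfl : k = 0 ∨ k = 1 := by simp at hk; omega
    · exact ⟨[z], List.nil_sublist _, rfl, by simp [vtWeight]⟩
    · exact ⟨[b], List.nil_sublist _, rfl, by simp [vtWeight, hb]⟩
  | cons a t ih =>
    intro k hk
    simp only [List.length_cons] at hk
    by_cases ha : a = z
    · subst ha
      by_cases hkt : k ≤ t.length + 1
      · obtain ⟨c, hc, hlen, hw⟩ := ih k hkt
        exact ⟨a :: c, hc.cons_cons a, by simp [hlen], by simp [vtWeight, hw]⟩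
      · refine ⟨b :: a :: t, List.sublist_cons_self _ _, rfl, ?_⟩
        simp [vtWeight, hb]
        omega
    · obtain rfl | hk0 := Nat.eq_zero_or_pos k
      · exact ⟨z :: a :: t, List.sublist_cons_self _ _, rfl, by simp [vtWeight]⟩
      · obtain ⟨c, hc, hlen, hw⟩ := ih (k - 1) (by omega)
        refine ⟨a :: c, hc.cons_cons a, by simp [hlen], ?_⟩
        simp only [vtWeight, if_neg ha, hw, hlen]
        omega

lemma exists_lt_add_mod_eq {N r : ℕ} (hr : r < N) (v : ℕ) : ∃ k < N, (v + k) % N = r := by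
  have hv := Nat.mod_lt v (by omega : 0 < N)
  refine ⟨(r + N - v % N) % N, Nat.mod_lt _ (by omega), ?_⟩
  have hdiv := Nat.div_add_mod v N
  rw [Nat.add_mod_mod, show v + (r + N - v % N) = r + N * (v / N + 1) by grind,
    Nat.add_mul_mod_self_left, Nat.mod_eq_of_lt hr]

lemma isDeletionCovering_filter_vtWeight_mod [Fintype α] {z b : α} (hb : b ≠ z) {n : ℕ}
    (hn : 1 ≤ n) (r : ℕ) (hr : r < n + 1) :
    IsDeletionCovering n 1 {c ∈ words α n | vtWeight z c % (n + 1) = r} := by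
  refine ⟨fun c hc => mem_words.mp (mem_filter.mp hc).1, fun y hy => ?_⟩
  obtain ⟨k, hk, hmod⟩ := exists_lt_add_mod_eq hr (vtWeight z y)
  obtain ⟨c, hyc, hlen, hw⟩ := exists_sublist_vtWeight_eq_add hb y k (by omega)
  exact ⟨c, mem_filter.mpr ⟨mem_words.mpr (by omega), by rw [hw, hmod]⟩, hyc⟩

end Codes

section KD

variable {q : ℕ}

lemma KD_le_card {n R : ℕ} {C : Finset (List (Fin q))} (hC : IsDeletionCovering n R C) :
    KD q n R ≤ #C :=
  Nat.sInf_le ⟨C, hC.1, hC.2, rfl⟩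

lemma KD_one_mul_le (hq : 2 ≤ q) {n : ℕ} (hn : 1 ≤ n) : KD q n 1 * (n + 1) ≤ q ^ n := by
  obtain ⟨b, z, hb⟩ := (Fin.nontrivial_iff_two_le.mpr hq).exists_pair_ne
  calc KD q n 1 * (n + 1) = ∑ r ∈ range (n + 1), KD q n 1 := by
        rw [sum_const, card_range, smul_eq_mul, mul_comm]
    _ ≤ ∑ r ∈ range (n + 1), #{c ∈ words (Fin q) n | vtWeight z c % (n + 1) = r} :=
        sum_le_sum fun r hr =>
          KD_le_card (isDeletionCovering_filter_vtWeight_mod hb hn r (mem_range.mp hr))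
    _ = #(words (Fin q) n) :=
        (card_eq_sum_card_fiberwise fun _ _ => mem_range.mpr (Nat.mod_lt _ n.succ_pos)).symm
    _ = q ^ n := by rw [card_words, Fintype.card_fin]

section

variable [NeZero q]

lemma exists_isDeletionCovering_card_eq_KD (n R : ℕ) :
    ∃ C : Finset (List (Fin q)), IsDeletionCovering n R C ∧ #C = KD q n R := by
  have hwords := isDeletionCovering_words (α := Fin q) n R
  have hmem : KD q n R ∈ _ := Nat.sInf_mem ⟨_, words (Fin q) n, hwords.1, hwords.2, rfl⟩
  obtain ⟨C, h₁, h₂, hC⟩ := hmem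
  exact ⟨C, ⟨h₁, h₂⟩, hC⟩

lemma KD_le_pow (n R : ℕ) : KD q n R ≤ q ^ n := by
  simpa [card_words] using KD_le_card (isDeletionCovering_words (α := Fin q) n R)

lemma card_filter_changes_le_le_KD_mul {n R : ℕ} (hRn : R ≤ n) (k : ℕ) :
    #{y ∈ words (Fin q) (n - R) | changes y ≤ k} ≤ KD q n R * (k + 3 * R).choose R := by
  obtain ⟨C, hC, hcard⟩ := exists_isDeletionCovering_card_eq_KD (q := q) n R
  simpa [hcard] using hC.card_filter_changes_le hRn k

lemma KD_add_le {n₁ R₁ n₂ R₂ : ℕ} (hR₁ : R₁ ≤ n₁) (hR₂ : R₂ ≤ n₂) :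
    KD q (n₁ + n₂) (R₁ + R₂) ≤ KD q n₁ R₁ * KD q n₂ R₂ := by
  obtain ⟨C₁, hC₁, hcard₁⟩ := exists_isDeletionCovering_card_eq_KD (q := q) n₁ R₁
  obtain ⟨C₂, hC₂, hcard₂⟩ := exists_isDeletionCovering_card_eq_KD (q := q) n₂ R₂
  rw [← hcard₁, ← hcard₂]
  exact (KD_le_card (hC₁.image₂_append hC₂ hR₁ hR₂)).trans (card_image₂_le _ _ _)

lemma KD_mul_add_le {s : ℕ} (hs : 1 ≤ s) (r R : ℕ) : KD q (R * s + r) R ≤ KD q s 1 ^ R * q ^ r := by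
  induction R with
  | zero => simpa using KD_le_pow r 0
  | succ R ih =>
    have hRs : R ≤ R * s + r := le_add_right (Nat.le_mul_of_pos_right R hs)
    calc KD q ((R + 1) * s + r) (R + 1) = KD q (s + (R * s + r)) (1 + R) := by ring_nf
      _ ≤ KD q s 1 * KD q (R * s + r) R := KD_add_le hs hRs
      _ ≤ KD q s 1 * (KD q s 1 ^ R * q ^ r) := Nat.mul_le_mul_left _ ih
      _ = KD q s 1 ^ (R + 1) * q ^ r := by ring

end

/-- Concatenating `R` single-deletion-covering codes of length `n / R`. -/
lemma KD_mul_pow_le (hq : 2 ≤ q) {n R : ℕ} (hRn : R ≤ n) : KD q n R * (n / R + 1) ^ R ≤ q ^ n := by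
  have : NeZero q := ⟨by omega⟩
  obtain rfl | hR := Nat.eq_zero_or_pos R
  · simpa using KD_le_pow n 0
  set s := n / R
  have hs : 1 ≤ s := (Nat.one_le_div_iff hR).mpr hRn
  have hn : R * s + n % R = n := Nat.div_add_mod n R
  calc KD q n R * (s + 1) ^ R ≤ KD q s 1 ^ R * q ^ (n % R) * (s + 1) ^ R := by
        gcongr
        simpa [hn] using KD_mul_add_le hs (n % R) R
    _ = (KD q s 1 * (s + 1)) ^ R * q ^ (n % R) := by rw [mul_pow]; ring
    _ ≤ (q ^ s) ^ R * q ^ (n % R) := by gcongr; exact KD_one_mul_le hq hs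
    _ = q ^ n := by rw [← pow_mul, ← pow_add, mul_comm s R, hn]

end KD

lemma tendsto_natCast_div_floor_mul_add {a : ℝ} (ha : 0 < a) (b : ℝ) :
    Tendsto (fun n : ℕ => (n : ℝ) / (⌊a * n⌋₊ + b)) atTop (𝓝 a⁻¹) := by
  have hfloor : Tendsto (fun n : ℕ => (⌊a * n⌋₊ : ℝ) / n) atTop (𝓝 a) :=
    (tendsto_nat_floor_mul_div_atTop ha.le).comp tendsto_natCast_atTop_atTop
  have hsum := (hfloor.add (tendsto_const_div_atTop_nhds_zero_nat b)).inv₀ (by simpa using ha.ne')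
  rw [add_zero] at hsum
  refine hsum.congr fun n => ?_
  simp only [← add_div, inv_div]

section Asymptotics

variable {q R : ℕ}

noncomputable def normalizedKD (q R n : ℕ) : ℝ :=
  (KD q n R : ℝ) * (n : ℝ) ^ R * ((q : ℝ) - 1) ^ R / ((R.factorial : ℝ) * (q : ℝ) ^ n)

lemma natCast_pow_le_mul_div_add_one_pow (n R : ℕ) : (n : ℝ) ^ R ≤ (R * (n / R + 1 : ℕ)) ^ R := by
  obtain rfl | hR := Nat.eq_zero_or_pos R
  · simp
  gcongr
  exact_mod_cast (Nat.lt_div_mul_add hR).le.trans_eq (by ring)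

lemma normalizedKD_le (hq : 2 ≤ q) {n : ℕ} (hRn : R ≤ n) :
    normalizedKD q R n ≤ (R * ((q : ℝ) - 1)) ^ R / R.factorial := by
  have hq1 : (1 : ℝ) ≤ q := by exact_mod_cast one_le_two.trans hq
  have hKD : (KD q n R : ℝ) * ((n / R + 1 : ℕ) : ℝ) ^ R ≤ (q : ℝ) ^ n := by
    exact_mod_cast KD_mul_pow_le hq hRn
  have hq1' : (0 : ℝ) ≤ q - 1 := by linarith
  rw [normalizedKD, div_le_div_iff₀ (by positivity) (by positivity)]
  calc (KD q n R : ℝ) * n ^ R * (q - 1) ^ R * R.factorial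
      ≤ KD q n R * (R * (n / R + 1 : ℕ)) ^ R * (q - 1) ^ R * R.factorial :=
        mul_le_mul_of_nonneg_right (mul_le_mul_of_nonneg_right (mul_le_mul_of_nonneg_left
          (natCast_pow_le_mul_div_add_one_pow n R) (Nat.cast_nonneg _)) (pow_nonneg hq1' R))
          (Nat.cast_nonneg _)
    _ = (R * (q - 1)) ^ R * R.factorial * (KD q n R * ((n / R + 1 : ℕ) : ℝ) ^ R) := by
        rw [mul_pow, mul_pow]; ring
    _ ≤ (R * (q - 1)) ^ R * R.factorial * q ^ n := by gcongr
    _ = (R * (q - 1)) ^ R * (R.factorial * q ^ n) := by ring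

lemma isBoundedUnder_le_normalizedKD (hq : 2 ≤ q) :
    IsBoundedUnder (· ≤ ·) atTop (normalizedKD q R) :=
  isBoundedUnder_of_eventually_le ((eventually_ge_atTop R).mono fun _ hn => normalizedKD_le hq hn)

lemma card_filter_changes_le_div_mul_le_normalizedKD [NeZero q] {n : ℕ} (hRn : R ≤ n) (k : ℕ) :
    (#{y ∈ words (Fin q) (n - R) | changes y ≤ k} : ℝ) / q ^ (n - R) *
      (((q : ℝ) - 1) / q * (n / (k + 3 * R))) ^ R ≤ normalizedKD q R n := by
  set G := #{y ∈ words (Fin q) (n - R) | changes y ≤ k}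
  have hchoose : R.factorial * (k + 3 * R).choose R ≤ (k + 3 * R) ^ R := by
    rw [← Nat.descFactorial_eq_factorial_mul_choose]
    exact Nat.descFactorial_le_pow _ _
  have hG : G * R.factorial ≤ KD q n R * (k + 3 * R) ^ R := by
    calc G * R.factorial ≤ KD q n R * (k + 3 * R).choose R * R.factorial :=
          Nat.mul_le_mul_right _ (card_filter_changes_le_le_KD_mul hRn k)
      _ ≤ KD q n R * (k + 3 * R) ^ R := by rw [mul_assoc, mul_comm _ R.factorial]; gcongr
  have hpow : 0 < (k + 3 * R) ^ R :=
    (Nat.mul_pos R.factorial_pos (Nat.choose_pos (by omega))).trans_le hchoose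
  have hG' : (G : ℝ) * R.factorial ≤ KD q n R * ((k : ℝ) + 3 * R) ^ R := by exact_mod_cast hG
  have hpow' : (0 : ℝ) < ((k : ℝ) + 3 * R) ^ R := by exact_mod_cast hpow
  have hq1 : (1 : ℝ) ≤ q := Nat.one_le_cast.mpr (Nat.pos_of_neZero q)
  have hqn : (q : ℝ) ^ n = q ^ (n - R) * q ^ R := by rw [← pow_add, Nat.sub_add_cancel hRn]
  have hq1' : (0 : ℝ) ≤ q - 1 := by linarith
  have hq0 : (q : ℝ) ≠ 0 := by positivity
  have hX : ((k : ℝ) + 3 * R) ^ R ≠ 0 := hpow'.ne'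
  calc (G : ℝ) / q ^ (n - R) * (((q : ℝ) - 1) / q * (n / (k + 3 * R))) ^ R
      = (G * R.factorial) * (((q : ℝ) - 1) ^ R * n ^ R) /
          (R.factorial * q ^ n * ((k : ℝ) + 3 * R) ^ R) := by
        rw [mul_pow, div_pow, div_pow, hqn]
        field_simp
    _ ≤ (KD q n R * ((k : ℝ) + 3 * R) ^ R) * (((q : ℝ) - 1) ^ R * n ^ R) /
          (R.factorial * q ^ n * ((k : ℝ) + 3 * R) ^ R) := by
        gcongr
    _ = normalizedKD q R n := by
        rw [normalizedKD]
        field_simp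

lemma pow_le_liminf_normalizedKD (hq : 2 ≤ q) {a : ℝ} (ha : ((q : ℝ) - 1) / q < a) :
    (((q : ℝ) - 1) / q * a⁻¹) ^ R ≤ liminf (normalizedKD q R) atTop := by
  have : NeZero q := ⟨by omega⟩
  have hq1 : (1 : ℝ) ≤ q := by exact_mod_cast one_le_two.trans hq
  have ha0 : 0 < a := lt_of_le_of_lt (div_nonneg (by linarith) (by linarith)) ha
  set β : ℕ → ℝ := fun m => #{y ∈ words (Fin q) m | a * m ≤ changes y} / (q : ℝ) ^ m
  have hβ : Tendsto (fun n => β (n - R)) atTop (𝓝 0) := by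
    have := tendsto_card_changes_ge_div_pow (α := Fin q) (by simpa using ha)
    simp only [Fintype.card_fin] at this
    exact this.comp (tendsto_sub_atTop_nat R)
  set L : ℕ → ℝ := fun n => (1 - β (n - R)) * (((q : ℝ) - 1) / q * (n / (⌊a * n⌋₊ + 3 * R))) ^ R
  have hL : Tendsto L atTop (𝓝 ((((q : ℝ) - 1) / q * a⁻¹) ^ R)) := by
    rw [show (((q : ℝ) - 1) / q * a⁻¹) ^ R = (1 - 0) * (((q : ℝ) - 1) / q * a⁻¹) ^ R by ring]
    exact (tendsto_const_nhds.sub hβ).mul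
      ((tendsto_const_nhds.mul (tendsto_natCast_div_floor_mul_add ha0 (3 * R))).pow R)
  have hLf : ∀ᶠ n in atTop, L n ≤ normalizedKD q R n := by
    filter_upwards [eventually_ge_atTop R] with n hn
    refine le_trans (mul_le_mul_of_nonneg_right ?_ (by positivity))
      (card_filter_changes_le_div_mul_le_normalizedKD hn ⌊a * n⌋₊)
    have hk : a * (n - R : ℕ) < ⌊a * n⌋₊ + 1 := by
      have : ((n - R : ℕ) : ℝ) ≤ n := by exact_mod_cast n.sub_le R
      nlinarith [Nat.lt_floor_add_one (a * n)]
    simpa using one_sub_card_changes_ge_div_le (α := Fin q) hk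
  calc (((q : ℝ) - 1) / q * a⁻¹) ^ R = liminf L atTop := hL.liminf_eq.symm
    _ ≤ liminf (normalizedKD q R) atTop :=
        liminf_le_liminf hLf hL.isBoundedUnder_ge
          (isBoundedUnder_le_normalizedKD hq).isCoboundedUnder_ge

end Asymptotics

end DeletionCovering

open DeletionCovering

theorem deletion_covering_lower_bound_asymptotic_general (q R : ℕ) (hq : 2 ≤ q) :
    1 ≤ Filter.liminf (fun n : ℕ =>
      (KD q n R : ℝ) * (n : ℝ) ^ R * ((q : ℝ) - 1) ^ R /
        ((R.factorial : ℝ) * (q : ℝ) ^ n)) Filter.atTop := by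
  have hp : (0 : ℝ) < ((q : ℝ) - 1) / q := by
    have : (2 : ℝ) ≤ q := by exact_mod_cast hq
    exact div_pos (by linarith) (by linarith)
  have hcont : Tendsto (fun a : ℝ => (((q : ℝ) - 1) / q * a⁻¹) ^ R)
      (𝓝[>] (((q : ℝ) - 1) / q)) (𝓝 1) := by
    have := ((tendsto_const_nhds (x := ((q : ℝ) - 1) / q)).mul (tendsto_inv₀ hp.ne')).pow R
    rw [mul_inv_cancel₀ hp.ne', one_pow] at this
    exact this.mono_left nhdsWithin_le_nhds
  exact le_of_tendsto hcont
    (eventually_nhdsWithin_of_forall fun a ha => pow_le_liminf_normalizedKD hq ha)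

/-- Asymptotic sphere-covering lower bound for `R`-deletion-covering codes:
`liminf_{n→∞} K_D^q(n,R) · n^R (q-1)^R / (R! q^n) ≥ 1`. -/
theorem deletion_covering_lower_bound_asymptotic (q R : ℕ) (hq : 2 ≤ q) (hR : 1 ≤ R) :
    1 ≤ Filter.liminf (fun n : ℕ =>
      (KD q n R : ℝ) * (n : ℝ) ^ R * ((q : ℝ) - 1) ^ R /
        ((R.factorial : ℝ) * (q : ℝ) ^ n)) Filter.atTop :=
  deletion_covering_lower_bound_asymptotic_general q R hq
end

section
/- For all integers n ≥ 1, q ≥ 2, 0 ≤ a ≤ n, and 0 ≤ b < ⌊q/2⌋, the code C_NBVT^q(n;a,b) = {c ∈ Σ_q^n : Σ_{i=1}^n i·(c_i mod 2) ≡ a (mod n+1) and Σ_{i=1}^n ⌊c_i/2⌋ ≡ b (mod ⌊q/2⌋)} is a single-deletion-covering code: every y ∈ Σ_q^{n−1} is a subsequence of some c ∈ C_NBVT^q(n;a,b). -/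
/-!
Every codeword is obtained from `y` by inserting one symbol `s = 2 v + e` at some index `p`.
On the parity word `x` of `y`, inserting the bit `e` at `p` raises `∑ (i + 1) x_i` by
`(p + 1) e` plus the number of ones of `x` after `p`. Inserting a `0` realises every increment
from `0` to the weight of `x`, inserting a `1` every increment from the weight plus one to
`|x| + 1 = n`, so every residue modulo `n + 1` is reached. The half `v = ⌊s/2⌋` can be any
value below `⌊q/2⌋` and only shifts the second sum, by `v`.
-/

open Finset

/-- The Varshamov–Tenengolts sum `∑ (i + 1) * l[i]`; entry `i` is counted once in each of the
`i + 1` suffix sums. -/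
def vtSum : List ℕ → ℕ
  | [] => 0
  | x :: t => x + t.sum + vtSum t

theorem vtSum_insertIdx (x : List ℕ) {p : ℕ} (hp : p ≤ x.length) (e : ℕ) :
    vtSum (x.insertIdx p e) = vtSum x + (p + 1) * e + (x.drop p).sum := by
  induction p generalizing x with
  | zero => simp only [List.insertIdx_zero, vtSum, List.drop_zero]; ring
  | succ p ih =>
    obtain ⟨h, t, rfl⟩ := List.exists_cons_of_length_pos (by omega : 0 < x.length)
    have hp' : p ≤ t.length := by simpa using hp
    simp only [List.insertIdx_succ_cons, vtSum, List.drop_succ_cons,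
      List.CommMonoid.sum_insertIdx hp', ih t hp']
    ring

theorem sum_range_getD_eq_sum_map {α : Type*} {l : List α} {n : ℕ} (hl : l.length = n)
    (d : α) (f : α → ℕ) : ∑ i ∈ range n, f (l.getD i d) = (l.map f).sum := by
  subst hl
  induction l with
  | nil => simp
  | cons x t ih =>
    simp only [List.length_cons, sum_range_succ', List.getD_cons_succ, List.getD_cons_zero, ih,
      List.map_cons, List.sum_cons, add_comm]

theorem sum_range_succ_mul_getD_eq_vtSum {α : Type*} {l : List α} {n : ℕ} (hl : l.length = n)
    (d : α) (f : α → ℕ) : ∑ i ∈ range n, (i + 1) * f (l.getD i d) = vtSum (l.map f) := by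
  subst hl
  induction l with
  | nil => simp [vtSum]
  | cons x t ih =>
    simp only [List.length_cons, sum_range_succ', List.getD_cons_succ, List.getD_cons_zero,
      add_mul (_ + 1) 1, one_mul, sum_add_distrib, ih, sum_range_getD_eq_sum_map rfl,
      List.map_cons, vtSum]
    ring

theorem Nat.exists_le_eq_of_forall_le_add_one {f : ℕ → ℕ} (hf : ∀ p, f (p + 1) ≤ f p + 1)
    {m t : ℕ} (h0 : f 0 ≤ t) (hm : t ≤ f m) : ∃ p ≤ m, f p = t := by
  induction m with
  | zero => exact ⟨0, le_rfl, le_antisymm h0 hm⟩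
  | succ m ih =>
    by_cases h : t ≤ f m
    · obtain ⟨p, hp, hfp⟩ := ih h
      exact ⟨p, hp.trans m.le_succ, hfp⟩
    · exact ⟨m + 1, le_rfl, by have := hf m; omega⟩

theorem Nat.exists_lt_add_mod_eq (s : ℕ) {N a : ℕ} (ha : a < N) : ∃ t < N, (s + t) % N = a := by
  refine ⟨(a + (N - s % N)) % N, Nat.mod_lt _ (by omega), ?_⟩
  have hs := Nat.div_add_mod s N
  have hsN := Nat.mod_lt s (by omega : 0 < N)
  rw [Nat.add_mod_mod, show s + (a + (N - s % N)) = a + N * (s / N + 1) by grind,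
    Nat.add_mul_mod_self_left, Nat.mod_eq_of_lt ha]

theorem sum_take_succ_mem_Icc {x : List ℕ} (hx : ∀ z ∈ x, z ≤ 1) (p : ℕ) :
    (x.take (p + 1)).sum ∈ Set.Icc (x.take p).sum ((x.take p).sum + 1) := by
  rcases lt_or_ge p x.length with hp | hp
  · have := hx _ (List.getElem_mem hp)
    rw [List.sum_take_succ x p hp, Set.mem_Icc]
    omega
  · rw [List.take_of_length_le hp, List.take_of_length_le (by omega)]
    simp

theorem exists_vtSum_insertIdx_eq_add {x : List ℕ} (hx : ∀ z ∈ x, z ≤ 1) {t : ℕ}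
    (ht : t ≤ x.length + 1) :
    ∃ p ≤ x.length, ∃ e ≤ 1, vtSum (x.insertIdx p e) = vtSum x + t := by
  have hstep p := sum_take_succ_mem_Icc hx p
  have hsplit p := List.sum_take_add_sum_drop x p
  suffices ∃ p ≤ x.length, ∃ e ≤ 1, (p + 1) * e + (x.drop p).sum = t by
    obtain ⟨p, hp, e, he, h⟩ := this
    exact ⟨p, hp, e, he, by rw [vtSum_insertIdx x hp, ← h, add_assoc]⟩
  rcases le_or_gt t x.sum with hts | hts
  · -- a `0` inserted where the suffix contains exactly `t` ones
    obtain ⟨p, hp, hpt⟩ := Nat.exists_le_eq_of_forall_le_add_one (f := fun p ↦ (x.take p).sum)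
      (fun p ↦ (hstep p).2) (t := x.sum - t) (m := x.length) (by simp) (by simp)
    refine ⟨p, hp, 0, zero_le_one, ?_⟩
    have := hsplit p
    omega
  · -- a `1` inserted at `p` adds `p + 1` plus the ones after it, which grows by at most one
    have hsum : x.sum ≤ x.length := by simpa using List.sum_le_card_nsmul x 1 hx
    obtain ⟨p, hp, hpt⟩ := Nat.exists_le_eq_of_forall_le_add_one
      (f := fun p ↦ p + (x.drop p).sum) (t := t - 1) (m := x.length)
      (fun p ↦ by have := (hstep p).1; have := hsplit p; have := hsplit (p + 1); omega)
      (by simp only [List.drop_zero]; omega) (by simp only [List.drop_length, List.sum_nil]; omega)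
    refine ⟨p, hp, 1, le_rfl, ?_⟩
    omega

/-- The non-binary VT code `C_NBVT^q(n;a,b)` is a single-deletion-covering code:
every `y ∈ Σ_q^(n-1)` is a subsequence of some codeword `c ∈ Σ_q^n` satisfying
`∑_{i=1}^n i·(c_i mod 2) ≡ a (mod n+1)` and `∑_{i=1}^n ⌊c_i/2⌋ ≡ b (mod ⌊q/2⌋)`. -/
theorem nbvt_is_single_deletion_covering (n q a b : ℕ) (hn : 1 ≤ n) (hq : 2 ≤ q)
    (ha : a ≤ n) (hb : b < q / 2) :
    ∀ y : List (Fin q), y.length = n - 1 →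
      ∃ c : List (Fin q), c.length = n ∧
        (∑ i ∈ Finset.range n,
          (i + 1) * (((c.getD i ⟨0, by omega⟩ : Fin q) : ℕ) % 2)) % (n + 1) = a ∧
        (∑ i ∈ Finset.range n,
          ((c.getD i ⟨0, by omega⟩ : Fin q) : ℕ) / 2) % (q / 2) = b ∧
        y.Sublist c := by
  intro y hy
  let parity (z : Fin q) : ℕ := z % 2
  let half (z : Fin q) : ℕ := z / 2
  obtain ⟨t, ht, hta⟩ := Nat.exists_lt_add_mod_eq (vtSum (y.map parity)) (by omega : a < n + 1)
  obtain ⟨p, hp, e, he, hpe⟩ := exists_vtSum_insertIdx_eq_add (x := y.map parity) (t := t)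
    (by simp only [List.mem_map, parity]; omega) (by rw [List.length_map]; omega)
  obtain ⟨v, hv, hvb⟩ := Nat.exists_lt_add_mod_eq (y.map half).sum hb
  let s : Fin q := ⟨2 * v + e, by omega⟩
  have hs : parity s = e ∧ half s = v := by simp only [parity, half, s]; omega
  rw [List.length_map] at hp
  have hc : (y.insertIdx p s).length = n := by
    rw [List.length_insertIdx_of_le_length hp]; omega
  refine ⟨y.insertIdx p s, hc, ?_, ?_, List.sublist_insertIdx y p s⟩
  · rw [sum_range_succ_mul_getD_eq_vtSum hc _ parity, List.map_insertIdx, hs.1, hpe, hta]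
  · rw [sum_range_getD_eq_sum_map hc _ half, List.map_insertIdx,
      List.CommMonoid.sum_insertIdx (by rwa [List.length_map]), hs.2, add_comm, hvb]
end

section
/- For every integer q ≥ 2 and every n ≥ 1, there exist nonnegative integers n1, n2 with n1 + n2 + 1 = n and a set S ⊆ Σ_q^{n1} such that, setting T = {y ∈ Σ_q^{n1+1} : no s ∈ S is a subsequence of y}, one has |S| + 7·|T| / V_I^q(n2,1) ≤ 7·q^{n1+1} / V_I^q(n,1). -/
open scoped Classical

/-- The finset of all words of length `n` over the alphabet `Fin q`. -/
def allWords (q n : ℕ) : Finset (List (Fin q)) :=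
  (Finset.univ : Finset (Fin n → Fin q)).image List.ofFn

/-!
When `(n + 1)(q - 1) + 1 ≤ 7q`, take `n1 = n - 1` and all words of length `n - 1`: nothing is
left uncovered. Otherwise take `n1 = (n - 1) / 2` and put each word of length `n1` into `S`
independently with probability `p = 5q / ((n + 1)(q - 1))`. A word `y` of length `n1 + 1` with
`r` runs has at least `r` distinct one-symbol deletions, so it is uncovered with probability at
most `(1 - p)^r`. Summing with the generating function `∑ z^runs = q z (1 + (q - 1) z)^n1`, the
expected number of uncovered words is at most `q^(n1 + 1) (1 - 5 / (n + 1))^n1 ≤ q^(n1 + 1) / 9`,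
so the expected cost is within the bound and some `S` attains it.
-/

open Finset

section Runs

variable {α : Type*} [DecidableEq α]

def numRuns : List α → ℕ
  | [] => 0
  | [_] => 1
  | a :: b :: t => numRuns (b :: t) + if a = b then 0 else 1

def deletions (y : List α) : Finset (List α) :=
  (y.sublistsLen (y.length - 1)).toFinset

theorem mem_deletions {y s : List α} :
    s ∈ deletions y ↔ s.Sublist y ∧ s.length = y.length - 1 := by
  simp [deletions, List.mem_sublistsLen]

theorem numRuns_le_card_deletions : ∀ y : List α, numRuns y ≤ #(deletions y)
  | [] => by simp [numRuns]
  | [a] => card_pos.mpr ⟨[], mem_deletions.mpr ⟨List.nil_sublist _, rfl⟩⟩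
  | a :: b :: t => by
    set D := (deletions (b :: t)).map ⟨(a :: ·), List.cons_injective⟩
    have hD : D ⊆ deletions (a :: b :: t) := by
      simp only [D, subset_iff, mem_map, Function.Embedding.coeFn_mk, mem_deletions]
      rintro _ ⟨s, ⟨hs, hlen⟩, rfl⟩
      exact ⟨hs.cons_cons a, by simp [hlen]⟩
    have ih : numRuns (b :: t) ≤ #D := by
      rw [card_map]; exact numRuns_le_card_deletions (b :: t)
    by_cases hab : a = b
    · simpa [numRuns, hab] using ih.trans (card_le_card hD)
    · have hbt : b :: t ∉ D := by simp [D, hab]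
      have hins : insert (b :: t) D ⊆ deletions (a :: b :: t) :=
        insert_subset (mem_deletions.mpr ⟨List.sublist_cons_self _ _, by simp⟩) hD
      calc numRuns (a :: b :: t) = numRuns (b :: t) + 1 := by simp [numRuns, hab]
        _ ≤ #(insert (b :: t) D) := by rw [card_insert_of_notMem hbt]; omega
        _ ≤ _ := card_le_card hins

end Runs

section Words

variable {q : ℕ}

theorem mem_allWords {n : ℕ} {x : List (Fin q)} : x ∈ allWords q n ↔ x.length = n := by
  refine ⟨?_, fun hx => ?_⟩
  · simp only [allWords, mem_image, mem_univ, true_and]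
    rintro ⟨f, rfl⟩
    exact List.length_ofFn
  · subst hx
    exact mem_image.mpr ⟨fun i => x[(i : ℕ)], mem_univ _, List.ofFn_getElem⟩

theorem card_allWords (n : ℕ) : #(allWords q n) = q ^ n := by
  rw [allWords, card_image_of_injective _ List.ofFn_injective]
  simp

theorem allWords_zero : allWords q 0 = {[]} := by
  ext x
  simp [mem_allWords]

theorem sum_allWords_succ {M : Type*} [AddCommMonoid M] (m : ℕ) (f : List (Fin q) → M) :
    ∑ y ∈ allWords q (m + 1), f y = ∑ a, ∑ w ∈ allWords q m, f (a :: w) := by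
  simp only [allWords, sum_image fun _ _ _ _ h => List.ofFn_injective h]
  rw [← (Fin.consEquiv fun _ => Fin q).sum_comp, Fintype.sum_prod_type]
  simp [Fin.consEquiv, List.ofFn_succ]

theorem sum_pow_ite_eq (b : Fin q) (z : ℝ) :
    ∑ a : Fin q, z ^ (if a = b then 0 else 1) = 1 + (q - 1) * z := by
  have h : ∀ a : Fin q, z ^ (if a = b then 0 else 1) = z + if a = b then 1 - z else 0 := by
    intro a; split_ifs <;> simp
  simp only [h, sum_add_distrib, sum_ite_eq', mem_univ, if_true, sum_const, card_univ,
    Fintype.card_fin, nsmul_eq_mul]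
  ring

theorem sum_pow_numRuns (z : ℝ) (m : ℕ) :
    ∑ y ∈ allWords q (m + 1), z ^ numRuns y = q * z * (1 + (q - 1) * z) ^ m := by
  induction m with
  | zero => simp [sum_allWords_succ, allWords_zero, numRuns]
  | succ m ih =>
    have hcons : ∀ w ∈ allWords q (m + 1),
        ∑ a : Fin q, z ^ numRuns (a :: w) = (1 + (q - 1) * z) * z ^ numRuns w := by
      intro w hw
      obtain ⟨b, t, rfl⟩ := List.exists_cons_of_length_eq_add_one (mem_allWords.mp hw)
      simp only [numRuns, pow_add, ← mul_sum, sum_pow_ite_eq]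
      ring
    rw [sum_allWords_succ, sum_comm, sum_congr rfl hcons, ← mul_sum, ih]
    ring

end Words

section BernoulliWeight

variable {α : Type*} [DecidableEq α] (p : ℝ) (U : Finset α)

def bernoulliWeight (S : Finset α) : ℝ := p ^ #S * (1 - p) ^ #(U \ S)

theorem sum_bernoulliWeight_mul_ite_disjoint (D : Finset α) :
    ∑ S ∈ U.powerset, bernoulliWeight p U S * (if Disjoint S D then 1 else 0)
      = (1 - p) ^ #(U ∩ D) := by
  have h := prod_add (fun i => if i ∉ D then p else 0) (fun _ => 1 - p) U
  have hlhs : ∀ i ∈ U, (if i ∉ D then p else 0) + (1 - p) = if i ∈ D then 1 - p else 1 := by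
    intro i _; split_ifs <;> ring
  rw [prod_congr rfl hlhs, prod_ite_mem, prod_const] at h
  rw [h]
  refine sum_congr rfl fun S _ => ?_
  simp only [prod_ite_zero, prod_const, bernoulliWeight, ← disjoint_left]
  split_ifs <;> ring

theorem sum_bernoulliWeight : ∑ S ∈ U.powerset, bernoulliWeight p U S = 1 := by
  simpa using sum_bernoulliWeight_mul_ite_disjoint p U ∅

theorem sum_bernoulliWeight_mul_card :
    ∑ S ∈ U.powerset, bernoulliWeight p U S * #S = p * #U := by
  have hcard : ∀ S ∈ U.powerset,
      (#S : ℝ) = ∑ x ∈ U, (1 - if Disjoint S {x} then 1 else 0) := by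
    intro S hS
    have hind : ∀ x, (1 - if Disjoint S {x} then 1 else 0 : ℝ) = if x ∈ S then 1 else 0 := by
      intro x; by_cases hx : x ∈ S <;> simp [hx]
    simp only [hind, sum_ite_mem, inter_eq_right.mpr (mem_powerset.mp hS)]
    simp
  have hmarg : ∀ x ∈ U,
      ∑ S ∈ U.powerset, bernoulliWeight p U S * (1 - if Disjoint S {x} then 1 else 0) = p := by
    intro x hx
    simp only [mul_sub, mul_one, sum_sub_distrib, sum_bernoulliWeight,
      sum_bernoulliWeight_mul_ite_disjoint, inter_singleton_of_mem hx, card_singleton]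
    ring
  rw [sum_congr rfl fun S hS => by rw [hcard S hS, mul_sum], sum_comm, sum_congr rfl hmarg]
  simp [mul_comm]

theorem exists_le_of_sum_bernoulliWeight_mul_le (hp0 : 0 < p) (hp1 : p < 1)
    {f : Finset α → ℝ} {c : ℝ} (h : ∑ S ∈ U.powerset, bernoulliWeight p U S * f S ≤ c) :
    ∃ S ⊆ U, f S ≤ c := by
  have hc : ∑ S ∈ U.powerset, bernoulliWeight p U S * c = c := by
    rw [← sum_mul, sum_bernoulliWeight, one_mul]
  obtain ⟨S, hS, hle⟩ := exists_le_of_sum_le ⟨∅, empty_mem_powerset U⟩ (h.trans hc.ge)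
  exact ⟨S, mem_powerset.mp hS,
    le_of_mul_le_mul_left hle (mul_pos (pow_pos hp0 _) (pow_pos (sub_pos.mpr hp1) _))⟩

end BernoulliWeight

section Covering

variable {q : ℕ}

def uncovered (S : Finset (List (Fin q))) (m : ℕ) : Finset (List (Fin q)) :=
  (allWords q m).filter (fun y => ¬ ∃ s ∈ S, s.Sublist y)

theorem uncovered_allWords (m : ℕ) : uncovered (allWords q m) (m + 1) = ∅ := by
  refine filter_eq_empty_iff.mpr fun y hy => not_not_intro ⟨y.tail, ?_, y.tail_sublist⟩
  simp [mem_allWords.mp hy, mem_allWords]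

theorem card_uncovered_eq_sum {k : ℕ} {S : Finset (List (Fin q))} (hS : S ⊆ allWords q k) :
    (#(uncovered S (k + 1)) : ℝ)
      = ∑ y ∈ allWords q (k + 1), if Disjoint S (deletions y) then 1 else 0 := by
  rw [uncovered, card_filter, Nat.cast_sum]
  refine sum_congr rfl fun y hy => ?_
  have hcov : (∃ s ∈ S, s.Sublist y) ↔ ¬ Disjoint S (deletions y) := by
    simp only [not_disjoint_iff, mem_deletions, mem_allWords.mp hy]
    exact ⟨fun ⟨s, hs, hsy⟩ => ⟨s, hs, hsy, by simpa using mem_allWords.mp (hS hs)⟩,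
      fun ⟨s, hs, hsy, _⟩ => ⟨s, hs, hsy⟩⟩
  simp [hcov]

theorem sum_bernoulliWeight_mul_card_uncovered_le {p : ℝ} (hp0 : 0 ≤ p) (hp1 : p ≤ 1)
    (k : ℕ) :
    ∑ S ∈ (allWords q k).powerset, bernoulliWeight p (allWords q k) S * #(uncovered S (k + 1))
      ≤ q * (1 - p) * (1 + (q - 1) * (1 - p)) ^ k := by
  have hdel : ∀ y ∈ allWords q (k + 1), deletions y ⊆ allWords q k := fun y hy s hs => by
    simp [mem_allWords, (mem_deletions.mp hs).2, mem_allWords.mp hy]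
  calc _ = ∑ y ∈ allWords q (k + 1), ∑ S ∈ (allWords q k).powerset,
          bernoulliWeight p (allWords q k) S * if Disjoint S (deletions y) then 1 else 0 := by
        rw [sum_comm]
        refine sum_congr rfl fun S hS => ?_
        rw [card_uncovered_eq_sum (mem_powerset.mp hS), mul_sum]
    _ = ∑ y ∈ allWords q (k + 1), (1 - p) ^ #(deletions y) := by
        refine sum_congr rfl fun y hy => ?_
        rw [sum_bernoulliWeight_mul_ite_disjoint, inter_eq_right.mpr (hdel y hy)]
    _ ≤ ∑ y ∈ allWords q (k + 1), (1 - p) ^ numRuns y :=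
        sum_le_sum fun y _ => pow_le_pow_of_le_one (by linarith) (by linarith)
          (numRuns_le_card_deletions y)
    _ = _ := sum_pow_numRuns _ k

theorem exists_card_add_mul_card_uncovered_le {p c : ℝ} (hp0 : 0 < p) (hp1 : p < 1)
    (hc : 0 ≤ c) (k : ℕ) :
    ∃ S ⊆ allWords q k, #S + c * #(uncovered S (k + 1))
      ≤ p * q ^ k + c * (q * (1 - p) * (1 + (q - 1) * (1 - p)) ^ k) := by
  refine exists_le_of_sum_bernoulliWeight_mul_le p _ hp0 hp1 ?_
  simp only [mul_add, sum_add_distrib, sum_bernoulliWeight_mul_card, card_allWords,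
    Nat.cast_pow, mul_left_comm _ c, ← mul_sum]
  gcongr
  exact sum_bernoulliWeight_mul_card_uncovered_le hp0.le hp1.le k

end Covering

theorem nine_le_exp_nine_div_four : (9 : ℝ) ≤ Real.exp (9 / 4) := by
  have he : Real.exp (9 / 4) = Real.exp 1 ^ 2 * Real.exp (1 / 4) := by
    rw [← Real.exp_nat_mul, ← Real.exp_add]; norm_num
  have h1 := Real.exp_one_gt_d9
  have h2 : (1 + 1 / 4 : ℝ) ≤ Real.exp (1 / 4) := by
    linarith [Real.add_one_le_exp (1 / 4 : ℝ)]
  rw [he]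
  nlinarith [Real.exp_pos 1]

theorem one_sub_five_div_pow_le {n : ℕ} (hn : 7 ≤ n) :
    (1 - 5 / ((n : ℝ) + 1)) ^ ((n - 1) / 2) ≤ 1 / 9 := by
  rcases le_or_gt n 28 with hsmall | hlarge
  · interval_cases n <;> norm_num
  set x : ℝ := 5 / ((n : ℝ) + 1)
  have hx : x ≤ 1 := by
    rw [div_le_one (by positivity)]
    exact_mod_cast (by omega : 5 ≤ n + 1)
  have hkx : 9 / 4 ≤ ((n - 1) / 2 : ℕ) * x := by
    have h : (9 : ℝ) * (n + 1) ≤ 20 * ((n - 1) / 2 : ℕ) := by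
      exact_mod_cast (by omega : 9 * (n + 1) ≤ 20 * ((n - 1) / 2))
    rw [show ((n - 1) / 2 : ℕ) * x = 5 * ((n - 1) / 2 : ℕ) / ((n : ℝ) + 1) by ring,
      le_div_iff₀ (by positivity)]
    linarith
  calc (1 - x) ^ ((n - 1) / 2) ≤ Real.exp (-x) ^ ((n - 1) / 2) :=
        pow_le_pow_left₀ (by linarith) (by linarith [Real.add_one_le_exp (-x)]) _
    _ = Real.exp (-(((n - 1) / 2 : ℕ) * x)) := by rw [← Real.exp_nat_mul]; ring_nf
    _ ≤ Real.exp (-(9 / 4)) := Real.exp_le_exp.mpr (by linarith)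
    _ ≤ 1 / 9 := by
        rw [Real.exp_neg, one_div]
        exact inv_anti₀ (by norm_num) nine_le_exp_nine_div_four

theorem exists_almost_covering_of_pow_le (q n k m : ℕ) (hq : 2 ≤ q)
    (hlarge : 7 * (q : ℝ) < ((n : ℝ) + 1) * ((q : ℝ) - 1) + 1)
    (hk : (1 - 5 / ((n : ℝ) + 1)) ^ k ≤ 1 / 9) (hm : n + 1 ≤ 2 * (m + 1)) :
    ∃ S ⊆ allWords q k,
      (#S : ℝ) + 7 * #(uncovered S (k + 1)) / (((m : ℝ) + 1) * ((q : ℝ) - 1) + 1)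
        ≤ 7 * (q : ℝ) ^ (k + 1) / (((n : ℝ) + 1) * ((q : ℝ) - 1) + 1) := by
  have hqR : (2 : ℝ) ≤ q := by exact_mod_cast hq
  have hmR : ((n : ℝ) + 1) ≤ 2 * ((m : ℝ) + 1) := by exact_mod_cast hm
  set A := ((n : ℝ) + 1) * ((q : ℝ) - 1)
  set M := ((m : ℝ) + 1) * ((q : ℝ) - 1) + 1
  have hA : 13 < A := by linarith
  have hM : A + 1 ≤ 2 * M := by nlinarith
  have hMpos : 0 < M := by linarith
  set p := 5 * (q : ℝ) / A
  have hp0 : 0 < p := by positivity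
  have hp1 : p < 1 := by rw [div_lt_one (by linarith)]; linarith
  have hbase : 1 + ((q : ℝ) - 1) * (1 - p) = q * (1 - 5 / ((n : ℝ) + 1)) := by
    have hq1 : (q : ℝ) - 1 ≠ 0 := by linarith
    simp only [p, A]
    field_simp
    ring
  have hpow : (1 + ((q : ℝ) - 1) * (1 - p)) ^ k ≤ q ^ k * (1 / 9) := by
    rw [hbase, mul_pow]
    gcongr
  obtain ⟨S, hS, hle⟩ := exists_card_add_mul_card_uncovered_le (c := 7 / M) hp0 hp1
    (by positivity) k (q := q)
  refine ⟨S, hS, ?_⟩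
  calc _ = (#S : ℝ) + 7 / M * #(uncovered S (k + 1)) := by ring
    _ ≤ p * q ^ k + 7 / M * (q * (1 - p) * (1 + (q - 1) * (1 - p)) ^ k) := hle
    _ ≤ p * q ^ k + 7 / M * (q * 1 * (q ^ k * (1 / 9))) := by
        gcongr
        · exact pow_nonneg (by nlinarith) k
        · linarith
    _ = (q : ℝ) ^ (k + 1) * (5 / A + 7 / (9 * M)) := by
        simp only [p]
        field_simp
        ring
    _ ≤ (q : ℝ) ^ (k + 1) * (49 / (9 * (A + 1)) + 14 / (9 * (A + 1))) := by
        gcongr ?_ * (?_ + ?_)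
        · rw [div_le_div_iff₀ (by linarith) (by linarith)]
          linarith
        · rw [div_le_div_iff₀ (by linarith) (by linarith)]
          linarith
    _ = _ := by
        field_simp
        ring

/-- Existence of good almost-covering sets for a single insertion:
there are `n1, n2` with `n1+n2+1 = n` and a set `S ⊆ Σ_q^{n1}` such that,
with `T` the set of words of `Σ_q^{n1+1}` not covered by `S`,
`|S| + 7|T|/V_I^q(n2,1) ≤ 7 q^(n1+1)/V_I^q(n,1)`,
where `V_I^q(m,1) = (m+1)(q-1)+1`. -/
theorem exists_almost_covering_single_insertion (q n : ℕ) (hq : 2 ≤ q) (hn : 1 ≤ n) :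
    ∃ n1 n2 : ℕ, n1 + n2 + 1 = n ∧
      ∃ S : Finset (List (Fin q)),
        (∀ s ∈ S, s.length = n1) ∧
        (S.card : ℝ) +
          7 * (((allWords q (n1 + 1)).filter
              (fun y => ¬ ∃ s ∈ S, s.Sublist y)).card : ℝ) /
            (((n2 : ℝ) + 1) * ((q : ℝ) - 1) + 1)
          ≤ 7 * (q : ℝ) ^ (n1 + 1) / (((n : ℝ) + 1) * ((q : ℝ) - 1) + 1) := by
  have hqR : (2 : ℝ) ≤ q := by exact_mod_cast hq
  rcases le_or_gt (((n : ℝ) + 1) * ((q : ℝ) - 1) + 1) (7 * q) with hsmall | hlarge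
  · refine ⟨n - 1, 0, by omega, allWords q (n - 1), fun s hs => mem_allWords.mp hs, ?_⟩
    have hN : 0 < ((n : ℝ) + 1) * ((q : ℝ) - 1) + 1 := by nlinarith
    rw [← uncovered, uncovered_allWords, card_empty, card_allWords, le_div_iff₀ hN]
    push_cast
    rw [mul_zero, zero_div, add_zero, pow_succ, mul_left_comm]
    exact mul_le_mul_of_nonneg_left hsmall (by positivity)
  · have hn7 : 7 ≤ n := by
      by_contra! h
      have : (n : ℝ) + 1 ≤ 7 := by exact_mod_cast (by omega : n + 1 ≤ 7)
      nlinarith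
    obtain ⟨S, hS, hbound⟩ := exists_almost_covering_of_pow_le q n ((n - 1) / 2)
      (n - 1 - (n - 1) / 2) hq hlarge (one_sub_five_div_pow_le hn7) (by omega)
    exact ⟨(n - 1) / 2, n - 1 - (n - 1) / 2, by omega, S,
      fun s hs => mem_allWords.mp (hS hs), hbound⟩
end

section
/- For all integers n ≥ R ≥ 1 and every real c > 0, there exists a set S ⊆ {0,1}^{n+R} with |S| ≤ c·2^{n+R}/C(n,R) such that the set T = {y ∈ {0,1}^n : y is not a subsequence of any s ∈ S} satisfies |T| ≤ e^{−c}·e^{V_I(n,R)/2^{n+R}}·2^n. -/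
/-!
Pick `m = ⌊c·2^(n+R)/C(n,R)⌋` words of length `n+R` uniformly at random. Every word of length
`n` is a subsequence of exactly `V = V_I(n,R)` words of length `n+R`, whatever the word, so it is
missed by all `m` of them with probability `(1-p)^m`, where `p = V/2^(n+R)`. Hence some choice
misses at most `2^n (1-p)^m ≤ 2^n e^(-pm)` words, and `pm ≥ c - p` because `V ≥ C(n,R)`. The
random choice is made explicit by summing over all `m`-tuples.
-/

open scoped Classical

/-- The finset of all binary words of length `n`, as lists over `Fin 2`. -/
def allBinWords (n : ℕ) : Finset (List (Fin 2)) :=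
  (Finset.univ : Finset (Fin n → Fin 2)).image List.ofFn

open Finset

theorem exists_subset_card_le_card_filter_forall_not_mul_pow_le {α β : Type*} (A : Finset α)
    (hA : A.Nonempty) (Y : Finset β) (P : β → α → Prop) [DecidableRel P] {B : ℕ}
    (hB : ∀ y ∈ Y, #{a ∈ A | ¬ P y a} ≤ B) (m : ℕ) :
    ∃ S ⊆ A, #S ≤ m ∧ #{y ∈ Y | ∀ s ∈ S, ¬ P y s} * #A ^ m ≤ #Y * B ^ m := by
  set G := Fintype.piFinset fun _ : Fin m => A
  have hmiss (y : β) (hy : y ∈ Y) : #{g ∈ G | ∀ i, ¬ P y (g i)} ≤ B ^ m := by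
    have : {g ∈ G | ∀ i, ¬ P y (g i)} = Fintype.piFinset fun _ => {a ∈ A | ¬ P y a} := by
      ext g; simp [G, forall_and]
    rw [this, Fintype.card_piFinset, prod_const, card_univ, Fintype.card_fin]
    exact Nat.pow_le_pow_left (hB y hy) m
  have hsum : ∑ g ∈ G, #{y ∈ Y | ∀ i, ¬ P y (g i)} * #A ^ m ≤ ∑ _g ∈ G, #Y * B ^ m := by
    rw [← sum_mul, sum_const, smul_eq_mul, Fintype.card_piFinset, prod_const, card_univ,
      Fintype.card_fin, mul_comm]
    gcongr
    calc ∑ g ∈ G, #{y ∈ Y | ∀ i, ¬ P y (g i)}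
        = ∑ y ∈ Y, #{g ∈ G | ∀ i, ¬ P y (g i)} :=
          sum_card_bipartiteAbove_eq_sum_card_bipartiteBelow _
      _ ≤ ∑ _y ∈ Y, B ^ m := sum_le_sum hmiss
      _ = #Y * B ^ m := by rw [sum_const, smul_eq_mul]
  obtain ⟨g, hg, hle⟩ := exists_le_of_sum_le (Fintype.piFinset_nonempty.2 fun _ => hA) hsum
  refine ⟨univ.image g, ?_, card_image_le.trans (by simp), ?_⟩
  · simpa [image_subset_iff] using hg
  · simpa using hle

theorem one_sub_pow_le_exp_sub {p c : ℝ} {m : ℕ} (hp : p ≤ 1) (hc : c ≤ p * (m + 1)) :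
    (1 - p) ^ m ≤ Real.exp (p - c) :=
  calc (1 - p) ^ m ≤ Real.exp (-p) ^ m :=
        pow_le_pow_left₀ (by linarith) (Real.one_sub_le_exp_neg p) m
    _ = Real.exp (-(m * p)) := by rw [← Real.exp_nat_mul]; ring_nf
    _ ≤ Real.exp (p - c) := Real.exp_le_exp.2 (by linarith)

theorem sum_range_succ_choose (N k : ℕ) :
    ∑ i ∈ range k, (N + 1).choose i
      = ∑ i ∈ range k, N.choose i + ∑ i ∈ range (k - 1), N.choose i := by
  cases k with
  | zero => simp
  | succ k =>
    simp only [sum_range_succ', Nat.choose_succ_succ, sum_add_distrib, Nat.choose_zero_right,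
      Nat.add_sub_cancel]
    ring

lemma List.cons_sublist_cons_of_ne {α : Type*} {a b : α} (hab : a ≠ b) {t w : List α} :
    (a :: t).Sublist (b :: w) ↔ (a :: t).Sublist w := by
  simp [List.sublist_cons_iff, hab]

lemma mem_allBinWords {n : ℕ} {z : List (Fin 2)} : z ∈ allBinWords n ↔ z.length = n := by
  simp only [allBinWords, mem_image, mem_univ, true_and]
  constructor
  · rintro ⟨v, rfl⟩; simp
  · rintro rfl; exact ⟨z.get, List.ofFn_get z⟩

lemma card_allBinWords (n : ℕ) : #(allBinWords n) = 2 ^ n := by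
  rw [allBinWords, card_image_of_injective _ List.ofFn_injective, card_univ]
  simp

lemma allBinWords_zero : allBinWords 0 = {[]} := by
  ext z; simp [mem_allBinWords]

lemma card_filter_allBinWords_succ (N : ℕ) (p : List (Fin 2) → Prop) [DecidablePred p] :
    #{z ∈ allBinWords (N + 1) | p z}
      = #{w ∈ allBinWords N | p (0 :: w)} + #{w ∈ allBinWords N | p (1 :: w)} := by
  have hsplit : allBinWords (N + 1)
      = (allBinWords N).image (List.cons 0) ∪ (allBinWords N).image (List.cons 1) := by
    ext (_ | ⟨a, w⟩)
    · simp [mem_allBinWords]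
    · fin_cases a <;> simp [mem_allBinWords]
  have hdisj : Disjoint ((allBinWords N).image (List.cons (0 : Fin 2)))
      ((allBinWords N).image (List.cons 1)) := by
    simp [disjoint_left]
  rw [hsplit, filter_union, card_union_of_disjoint (disjoint_filter_filter hdisj),
    filter_image, filter_image, card_image_of_injective _ List.cons_injective,
    card_image_of_injective _ List.cons_injective]

/-- For `y.length > N` the truncated subtraction gives the empty sum, as it should. -/
theorem card_filter_sublist_allBinWords :
    ∀ (N : ℕ) (y : List (Fin 2)),
      #{z ∈ allBinWords N | y.Sublist z} = ∑ i ∈ range (N + 1 - y.length), N.choose i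
  | N, [] => by simp [card_allBinWords, Nat.sum_range_choose]
  | 0, _ :: _ => by simp [allBinWords_zero]
  | N + 1, a :: t => by
    have hcount (b : Fin 2) : #{w ∈ allBinWords N | (a :: t).Sublist (b :: w)}
        = if a = b then ∑ i ∈ range (N + 1 - t.length), N.choose i
          else ∑ i ∈ range (N - t.length), N.choose i := by
      split_ifs with hab
      · simp only [hab, List.cons_sublist_cons, card_filter_sublist_allBinWords N t]
      · simp only [List.cons_sublist_cons_of_ne hab, card_filter_sublist_allBinWords N (a :: t),
          List.length_cons, Nat.add_sub_add_right]
    rw [card_filter_allBinWords_succ, hcount, hcount, List.length_cons, Nat.add_sub_add_right,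
      sum_range_succ_choose, show N + 1 - t.length - 1 = N - t.length by omega]
    fin_cases a <;> simp [add_comm]

lemma card_filter_not_sublist_allBinWords_add {n R : ℕ} {y : List (Fin 2)} (hy : y.length = n) :
    #{z ∈ allBinWords (n + R) | ¬ y.Sublist z} + ∑ i ∈ range (R + 1), (n + R).choose i
      = 2 ^ (n + R) := by
  rw [← card_allBinWords,
    ← card_filter_add_card_filter_not (s := allBinWords (n + R)) (fun z => y.Sublist z),
    card_filter_sublist_allBinWords, hy, show n + R + 1 - n = R + 1 by omega, add_comm]

lemma sum_range_choose_add_le_two_pow (n R : ℕ) :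
    ∑ i ∈ range (R + 1), (n + R).choose i ≤ 2 ^ (n + R) :=
  le_add_self.trans_eq <|
    card_filter_not_sublist_allBinWords_add (List.length_replicate (n := n) (a := (0 : Fin 2)))

theorem exists_subset_allBinWords_card_filter_not_sublist_le (n R m : ℕ) :
    ∃ S ⊆ allBinWords (n + R), #S ≤ m ∧
      (#{y ∈ allBinWords n | ¬ ∃ s ∈ S, y.Sublist s} : ℝ)
        ≤ 2 ^ n * (1 - (∑ i ∈ range (R + 1), ((n + R).choose i : ℝ)) / 2 ^ (n + R)) ^ m := by
  obtain ⟨S, hSA, hSm, hT⟩ := exists_subset_card_le_card_filter_forall_not_mul_pow_le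
    (allBinWords (n + R)) ⟨List.replicate (n + R) 0, mem_allBinWords.2 List.length_replicate⟩
    (allBinWords n) (fun y z => y.Sublist z) (B := 2 ^ (n + R) - ∑ i ∈ range (R + 1), (n + R).choose i)
    (fun y hy => Nat.le_sub_of_add_le
      (card_filter_not_sublist_allBinWords_add (R := R) (mem_allBinWords.1 hy)).le) m
  refine ⟨S, hSA, hSm, ?_⟩
  rw [card_allBinWords, card_allBinWords] at hT
  have hfrac : (1 - (∑ i ∈ range (R + 1), ((n + R).choose i : ℝ)) / 2 ^ (n + R)) ^ m
      = ((2 ^ (n + R) - ∑ i ∈ range (R + 1), (n + R).choose i : ℕ) : ℝ) ^ m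
        / ((2 ^ (n + R) : ℕ) : ℝ) ^ m := by
    rw [← div_pow, Nat.cast_sub (sum_range_choose_add_le_two_pow n R)]
    push_cast
    field_simp
  simp only [not_exists, not_and]
  rw [hfrac, ← mul_div_assoc, le_div_iff₀ (by positivity)]
  exact_mod_cast hT

theorem exists_almost_covering_R_deletions_general (n R : ℕ) (hnR : R ≤ n)
    (c : ℝ) (hc : 0 < c) :
    ∃ S : Finset (List (Fin 2)),
      (∀ s ∈ S, s.length = n + R) ∧
      (S.card : ℝ) ≤ c * 2 ^ (n + R) / (n.choose R : ℝ) ∧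
      (((allBinWords n).filter (fun y => ¬ ∃ s ∈ S, y.Sublist s)).card : ℝ)
        ≤ Real.exp (-c) *
            Real.exp ((∑ i ∈ Finset.range (R + 1), ((n + R).choose i : ℝ)) / 2 ^ (n + R)) *
            2 ^ n := by
  set V : ℝ := ∑ i ∈ range (R + 1), ((n + R).choose i : ℝ)
  have hK : (0 : ℝ) < n.choose R := by exact_mod_cast Nat.choose_pos hnR
  have hKV : (n.choose R : ℝ) ≤ V := by
    have : n.choose R ≤ ∑ i ∈ range (R + 1), (n + R).choose i :=
      (Nat.choose_le_choose R (Nat.le_add_right n R)).trans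
        (single_le_sum (fun _ _ => Nat.zero_le _) (self_mem_range_succ R))
    simp only [V]
    exact_mod_cast this
  have hV : V / 2 ^ (n + R) ≤ 1 := by
    rw [div_le_one (by positivity)]
    simp only [V]
    exact_mod_cast sum_range_choose_add_le_two_pow n R
  set m := ⌊c * 2 ^ (n + R) / n.choose R⌋₊
  have hcm : c ≤ V / 2 ^ (n + R) * (m + 1) :=
    calc c ≤ c * (V / n.choose R) := le_mul_of_one_le_right hc.le ((one_le_div hK).2 hKV)
      _ = V / 2 ^ (n + R) * (c * 2 ^ (n + R) / n.choose R) := by field_simp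
      _ ≤ V / 2 ^ (n + R) * (m + 1) := by gcongr; exact (Nat.lt_floor_add_one _).le
  obtain ⟨S, hSA, hSm, hT⟩ := exists_subset_allBinWords_card_filter_not_sublist_le n R m
  refine ⟨S, fun s hs => mem_allBinWords.1 (hSA hs), ?_, ?_⟩
  · exact (Nat.cast_le.2 hSm).trans (Nat.floor_le (by positivity))
  · calc _ ≤ 2 ^ n * (1 - V / 2 ^ (n + R)) ^ m := hT
      _ ≤ 2 ^ n * Real.exp (V / 2 ^ (n + R) - c) := by
          gcongr; exact one_sub_pow_le_exp_sub hV hcm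
      _ = _ := by rw [sub_eq_neg_add, Real.exp_add]; ring

/-- Existence of small almost-covering sets for `R` deletions: for `n ≥ R ≥ 1`
and `c > 0` there is a set `S ⊆ {0,1}^(n+R)` of size at most `c·2^(n+R)/C(n,R)`
whose set `T` of words of `{0,1}^n` that are not a subsequence of any `s ∈ S`
satisfies `|T| ≤ e^(-c)·e^(V_I(n,R)/2^(n+R))·2^n`, where
`V_I(n,R) = ∑_{i=0}^R C(n+R,i)`. -/
theorem exists_almost_covering_R_deletions (n R : ℕ) (hR : 1 ≤ R) (hnR : R ≤ n)
    (c : ℝ) (hc : 0 < c) :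
    ∃ S : Finset (List (Fin 2)),
      (∀ s ∈ S, s.length = n + R) ∧
      (S.card : ℝ) ≤ c * 2 ^ (n + R) / (n.choose R : ℝ) ∧
      (((allBinWords n).filter (fun y => ¬ ∃ s ∈ S, y.Sublist s)).card : ℝ)
        ≤ Real.exp (-c) *
            Real.exp ((∑ i ∈ Finset.range (R + 1), ((n + R).choose i : ℝ)) / 2 ^ (n + R)) *
            2 ^ n :=
  exists_almost_covering_R_deletions_general n R hnR c hc
end
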